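/- arXiv:1212.3134 — 6 statements merged into one kernel-verified Lean document; each statement's English description precedes it below -/
import Mathlib

section
/- For any n×n complex matrix A, the numerical range W(A) equals the set of traces tr(AX) where X ranges over all n×n density matrices (positive semidefinite matrices with trace one). -/
open Matrix Kronecker
open scoped ComplexOrder

noncomputable def numRange {n : Type*} [Fintype n] (A : Matrix n n ℂ) : Set ℂ :=
  {z | ∃ u : n → ℂ, dotProduct (star u) u = 1 ∧ z = dotProduct (star u) (A.mulVec u)}

noncomputable def numRadius {n : Type*} [Fintype n] (A : Matrix n n ℂ) : ℝ :=
  sSup {r | ∃ z ∈ numRange A, r = ‖z‖}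

/-
A density matrix is a sum of rank-one matrices `v vᴴ` with `∑ ‖v‖² = 1`, so `tr (A X)` is a convex
combination of the values `⟨v, A v⟩ / ‖v‖²` at its nonzero summands, which lie in `W(A)`;
conversely `u uᴴ` is a density matrix for every unit vector `u`, with `tr (A u uᴴ) = ⟨u, A u⟩`.
What makes the first direction work is the Toeplitz–Hausdorff theorem: `W(A)` is convex. Since
`W(a A + b) = a W(A) + b`, it suffices to show that `[0, 1] ⊆ W(B)` whenever `0` and `1` lie in
`W(B)`, attained at unit vectors `v` and `u`. After multiplying `u` by a phase, `⟨w, B w⟩` is real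
along the real segment from `v` to `u`, and the intermediate value theorem gives every
intermediate ratio `⟨w, B w⟩ / ‖w‖²`.
-/

section
variable {n : Type*} [Fintype n]

theorem Matrix.trace_mul_vecMulVec {R : Type*} [CommSemiring R] (A : Matrix n n R) (u w : n → R) :
    (A * vecMulVec u w).trace = w ⬝ᵥ A *ᵥ u := by
  rw [mul_vecMulVec, trace_vecMulVec, dotProduct_comm]

theorem ofReal_re_dotProduct_star_self (x : n → ℂ) : ((star x ⬝ᵥ x).re : ℂ) = star x ⬝ᵥ x :=
  Complex.ext rfl (Complex.nonneg_iff.mp (dotProduct_star_self_nonneg x)).2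

theorem re_dotProduct_star_self_nonneg (x : n → ℂ) : 0 ≤ (star x ⬝ᵥ x).re :=
  (Complex.nonneg_iff.mp (dotProduct_star_self_nonneg x)).1

theorem dotProduct_mulVec_smul_add_smul (B : Matrix n n ℂ) (x y : n → ℂ) (s r : ℝ) :
    star (s • x + r • y) ⬝ᵥ B *ᵥ (s • x + r • y) =
      s ^ 2 * (star x ⬝ᵥ B *ᵥ x) + s * r * (star x ⬝ᵥ B *ᵥ y + star y ⬝ᵥ B *ᵥ x) +
        r ^ 2 * (star y ⬝ᵥ B *ᵥ y) := by
  simp only [star_add, star_smul, star_trivial, mulVec_add, mulVec_smul, add_dotProduct,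
    dotProduct_add, smul_dotProduct, dotProduct_smul, Complex.real_smul]
  ring

theorem mem_numRange_of_ne_zero {A : Matrix n n ℂ} {w : n → ℂ} {z : ℂ} (hw : w ≠ 0)
    (h : star w ⬝ᵥ A *ᵥ w = z * (star w ⬝ᵥ w)) : z ∈ numRange A := by
  set N := (star w ⬝ᵥ w).re
  have hN : (N : ℂ) = star w ⬝ᵥ w := ofReal_re_dotProduct_star_self w
  have hN0 : 0 < N := by
    have := (dotProduct_star_self_nonneg w).lt_of_ne' (dotProduct_star_self_eq_zero.not.mpr hw)
    exact (Complex.pos_iff.mp this).1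
  refine ⟨(√N)⁻¹ • w, ?_, ?_⟩
  all_goals
    simp only [star_smul, star_trivial, mulVec_smul, smul_dotProduct, dotProduct_smul,
      Complex.real_smul, h, ← hN]
    push_cast
    field_simp
    norm_cast
    rw [Real.sq_sqrt hN0.le]

theorem smul_add_smul_one_mem_numRange [DecidableEq n] {A : Matrix n n ℂ} {z : ℂ}
    (hz : z ∈ numRange A) (a b : ℂ) : a * z + b ∈ numRange (a • A + b • 1) := by
  obtain ⟨u, hu, rfl⟩ := hz
  exact ⟨u, hu, by simp [add_mulVec, smul_mulVec, hu]⟩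

theorem exists_ne_zero_dotProduct_mulVec_eq_mul {B : Matrix n n ℂ} {x y : n → ℂ} (hx : x ≠ 0)
    (hy : y ≠ 0) (hBx : star x ⬝ᵥ B *ᵥ x = star x ⬝ᵥ x) (hBy : star y ⬝ᵥ B *ᵥ y = 0)
    (hcross : (star x ⬝ᵥ B *ᵥ y + star y ⬝ᵥ B *ᵥ x).im = 0) {t : ℝ} (ht : t ∈ Set.Icc 0 1) :
    ∃ w ≠ 0, star w ⬝ᵥ B *ᵥ w = t * (star w ⬝ᵥ w) := by
  classical
  have ofReal_re {z : ℂ} (hz : z.im = 0) : (z.re : ℂ) = z := Complex.ext rfl hz.symm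
  set w : ℝ → n → ℂ := fun s ↦ s • x + (1 - s) • y
  set Nx := (star x ⬝ᵥ x).re
  set Ny := (star y ⬝ᵥ y).re
  set C := (star x ⬝ᵥ B *ᵥ y + star y ⬝ᵥ B *ᵥ x).re
  set D := (star x ⬝ᵥ y + star y ⬝ᵥ x).re
  have hD : (star x ⬝ᵥ y + star y ⬝ᵥ x).im = 0 := by
    rw [star_dotProduct y, Complex.star_def, Complex.add_im, Complex.conj_im, add_neg_cancel]
  -- on the real segment from `y` to `x`, `w ↦ ⟨w, B w⟩ - t ⟨w, w⟩` is real-valued, so the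
  -- intermediate value theorem applies to it
  set g : ℝ → ℝ := fun s ↦
    s ^ 2 * ((1 - t) * Nx) + s * (1 - s) * (C - t * D) - (1 - s) ^ 2 * (t * Ny)
  have hg : ∀ s, star (w s) ⬝ᵥ B *ᵥ w s - t * (star (w s) ⬝ᵥ w s) = g s := by
    intro s
    have hN := dotProduct_mulVec_smul_add_smul 1 x y s (1 - s)
    simp only [one_mulVec] at hN
    rw [dotProduct_mulVec_smul_add_smul, hN, hBx, hBy, ← ofReal_re_dotProduct_star_self x,
      ← ofReal_re_dotProduct_star_self y, ← ofReal_re hcross, ← ofReal_re hD]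
    simp only [g]
    push_cast
    ring
  have hg0 : g 0 ≤ 0 := by
    simp only [g]; nlinarith [ht.1, re_dotProduct_star_self_nonneg y]
  have hg1 : 0 ≤ g 1 := by
    simp only [g]; nlinarith [ht.2, re_dotProduct_star_self_nonneg x]
  obtain ⟨s, hs, hgs⟩ : ∃ s ∈ Set.Icc (0 : ℝ) 1, g s = 0 :=
    intermediate_value_Icc zero_le_one (by fun_prop : Continuous g).continuousOn ⟨hg0, hg1⟩
  refine ⟨w s, ?_, sub_eq_zero.mp (by rw [hg, hgs, Complex.ofReal_zero])⟩
  intro hws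
  rcases eq_or_ne s 0 with rfl | hs0
  · exact hy (by simpa [w] using hws)
  -- otherwise `x` is a real multiple of `y`, which forces `star x ⬝ᵥ x = star x ⬝ᵥ B *ᵥ x = 0`
  obtain ⟨c, rfl⟩ : ∃ c : ℝ, x = c • y := by
    have := congrArg (s⁻¹ • ·) hws
    simp only [w, smul_add, smul_smul, inv_mul_cancel₀ hs0, one_smul, smul_zero] at this
    exact ⟨-(s⁻¹ * (1 - s)), by rw [neg_smul]; exact eq_neg_of_add_eq_zero_left this⟩
  apply hx
  rw [← dotProduct_star_self_eq_zero, ← hBx]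
  simp [star_smul, mulVec_smul, hBy]

theorem ofReal_mem_numRange_of_zero_mem_of_one_mem {B : Matrix n n ℂ} (h0 : 0 ∈ numRange B)
    (h1 : 1 ∈ numRange B) {t : ℝ} (ht : t ∈ Set.Icc 0 1) : (t : ℂ) ∈ numRange B := by
  obtain ⟨v, hv, hBv⟩ := h0
  obtain ⟨u, hu, hBu⟩ := h1
  have ne_zero_of_unit {w : n → ℂ} (hw : star w ⬝ᵥ w = 1) : w ≠ 0 := by rintro rfl; simp at hw
  -- rotating `u` by a phase makes the cross terms of `B` between `ζ • u` and `v` sum to a real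
  set e := star u ⬝ᵥ B *ᵥ v - star (star v ⬝ᵥ B *ᵥ u)
  obtain ⟨ζ, hζ, hζe⟩ : ∃ ζ : ℂ, ζ ≠ 0 ∧ (star ζ * e).im = 0 := by
    rcases eq_or_ne e 0 with he | he
    · exact ⟨1, one_ne_zero, by simp [he]⟩
    · exact ⟨e, he, by simp [Complex.mul_im]; ring⟩
  obtain ⟨w, hw, hBw⟩ := exists_ne_zero_dotProduct_mulVec_eq_mul (x := ζ • u) (y := v)
    (smul_ne_zero hζ (ne_zero_of_unit hu)) (ne_zero_of_unit hv)
    (by simp only [star_smul, mulVec_smul, smul_dotProduct, dotProduct_smul, ← hBu, hu])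
    hBv.symm (by
      simp only [star_smul, mulVec_smul, smul_dotProduct, dotProduct_smul, smul_eq_mul]
      convert hζe using 1
      simp [e, Complex.mul_im]
      ring) ht
  exact mem_numRange_of_ne_zero hw hBw

theorem convex_numRange (A : Matrix n n ℂ) : Convex ℝ (numRange A) := by
  classical
  intro x hx y hy α β hα hβ hαβ
  rcases eq_or_ne x y with rfl | hxy
  · rwa [← add_smul, hαβ, one_smul]
  have hd : x - y ≠ 0 := sub_ne_zero.mpr hxy
  set B := (x - y)⁻¹ • A + (-((x - y)⁻¹ * y)) • (1 : Matrix n n ℂ)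
  have hB0 : 0 ∈ numRange B := by
    convert smul_add_smul_one_mem_numRange hy (x - y)⁻¹ (-((x - y)⁻¹ * y)) using 1; ring
  have hB1 : 1 ∈ numRange B := by
    convert smul_add_smul_one_mem_numRange hx (x - y)⁻¹ (-((x - y)⁻¹ * y)) using 1
    rw [← mul_neg, ← mul_add, ← sub_eq_add_neg, inv_mul_cancel₀ hd]
  have hA : A = (x - y) • B + y • 1 := by
    rw [smul_add, smul_smul, smul_smul, mul_neg, ← mul_assoc, mul_inv_cancel₀ hd, one_mul,
      one_smul, neg_smul, neg_add_cancel_right]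
  rw [hA]
  convert smul_add_smul_one_mem_numRange
    (ofReal_mem_numRange_of_zero_mem_of_one_mem hB0 hB1 ⟨hα, by linarith⟩) (x - y) y using 1
  rw [Complex.real_smul, Complex.real_smul, eq_sub_of_add_eq' hαβ]
  push_cast
  ring

theorem sum_dotProduct_mulVec_mem_numRange (A : Matrix n n ℂ) {ι : Type*} (s : Finset ι)
    (v : ι → n → ℂ) (hv : ∑ i ∈ s, star (v i) ⬝ᵥ v i = 1) :
    ∑ i ∈ s, star (v i) ⬝ᵥ A *ᵥ v i ∈ numRange A := by
  -- a convex combination of the points `⟨v i, A v i⟩ / ⟨v i, v i⟩` over the nonzero `v i`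
  set t := s.filter (v · ≠ 0)
  have hsum : ∑ i ∈ s, star (v i) ⬝ᵥ A *ᵥ v i =
      ∑ i ∈ t, (star (v i) ⬝ᵥ v i).re • (star (v i) ⬝ᵥ A *ᵥ v i / star (v i) ⬝ᵥ v i) := by
    rw [← Finset.sum_filter_of_ne (p := (v · ≠ 0)) fun i _ h hi ↦ h (by simp [hi])]
    refine Finset.sum_congr rfl fun i hi ↦ ?_
    rw [Complex.real_smul, ofReal_re_dotProduct_star_self, mul_div_cancel₀]
    exact dotProduct_star_self_eq_zero.not.mpr (Finset.mem_filter.mp hi).2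
  have hweights : ∑ i ∈ t, (star (v i) ⬝ᵥ v i).re = 1 := by
    rw [← Complex.ofReal_inj]
    push_cast
    simp only [ofReal_re_dotProduct_star_self]
    rwa [Finset.sum_filter_of_ne (p := (v · ≠ 0)) fun i _ h hi ↦ h (by simp [hi])]
  rw [hsum]
  refine (convex_numRange A).sum_mem (fun i _ ↦ re_dotProduct_star_self_nonneg _) hweights
    fun i hi ↦ ?_
  exact mem_numRange_of_ne_zero (Finset.mem_filter.mp hi).2
    (div_mul_cancel₀ _ (dotProduct_star_self_eq_zero.not.mpr (Finset.mem_filter.mp hi).2)).symm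

end

theorem numRange_eq_traces (n : ℕ) (A : Matrix (Fin n) (Fin n) ℂ) :
    numRange A =
      {z | ∃ X : Matrix (Fin n) (Fin n) ℂ, X.PosSemidef ∧ X.trace = 1 ∧ z = (A * X).trace} := by
  ext z
  constructor
  · rintro ⟨u, hu, rfl⟩
    exact ⟨vecMulVec u (star u), posSemidef_vecMulVec_self_star u,
      by rw [trace_vecMulVec, dotProduct_comm, hu], (trace_mul_vecMulVec A u _).symm⟩
  · rintro ⟨X, hX, hX1, rfl⟩
    obtain ⟨m, v, rfl⟩ := posSemidef_iff_eq_sum_vecMulVec.mp hX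
    simp only [trace_sum, trace_vecMulVec, Finset.mul_sum, trace_mul_vecMulVec] at hX1 ⊢
    simp only [dotProduct_comm (v _)] at hX1
    exact sum_dotProduct_mulVec_mem_numRange A _ v hX1
end

section
/- Let A ∈ M_n(ℂ) with numerical radius w(A) = 1, and suppose x is a unit vector with |x*Ax| = 1. Then for any unitary U ∈ M_n whose first column is x, writing U*AU in block form with (1,1)-entry scalar, we have U*AU = (x*Ax)·[[1, y*],[-y, B]] for some y ∈ ℂ^{n-1} and some B ∈ M_{n-1}. -/
open Matrix Kronecker

/-! Replacing `A` by `c̄ • A`, where `c = x*Ax` has modulus one, we may assume `x*Ax = 1`.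
Since `w(A) ≤ 1`, the quadratic polynomial `t ↦ v*v - Re (v*Av)` at `v = x + t w` is nonnegative
and vanishes at `t = 0`, so its linear coefficient vanishes. Doing this for `w` and `i w` gives
`x*Aw + conj (w*Ax) = x*w + conj (w*x)` for every `w`, i.e. `(A + Aᴴ) x = 2 x`. For `w` another
column of `U`, orthogonal to `x`, this reads `M₀ⱼ = -conj Mⱼ₀` for `M = c̄ • Uᴴ A U`. -/

lemma eq_zero_of_forall_mul_le_sq_mul {a b : ℝ} (h : ∀ t : ℝ, t * a ≤ t ^ 2 * b) : a = 0 := by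
  have hK : 0 < |b| + 1 := by positivity
  have := h (a / (|b| + 1))
  have hb := le_abs_self b
  field_simp at this
  nlinarith [sq_nonneg a, mul_nonneg (sq_nonneg a) (sub_nonneg.2 hb)]

section
variable {n : Type*} [Fintype n]

lemma star_add_smul_dotProduct_mulVec (N : Matrix n n ℂ) (x w : n → ℂ) (t : ℝ) :
    star (x + (t : ℂ) • w) ⬝ᵥ N *ᵥ (x + (t : ℂ) • w) =
      star x ⬝ᵥ N *ᵥ x + t * (star x ⬝ᵥ N *ᵥ w + star w ⬝ᵥ N *ᵥ x) + t ^ 2 * (star w ⬝ᵥ N *ᵥ w) := by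
  simp only [star_add, star_smul, Complex.star_def, Complex.conj_ofReal, mulVec_add, mulVec_smul,
    dotProduct_add, add_dotProduct, dotProduct_smul, smul_dotProduct, smul_eq_mul]
  ring

variable {N : Matrix n n ℂ} {x : n → ℂ}

lemma re_dotProduct_mulVec_add_eq
    (hle : ∀ v, (star v ⬝ᵥ N *ᵥ v).re ≤ (star v ⬝ᵥ v).re)
    (heq : (star x ⬝ᵥ N *ᵥ x).re = (star x ⬝ᵥ x).re) (w : n → ℂ) :
    (star x ⬝ᵥ N *ᵥ w + star w ⬝ᵥ N *ᵥ x).re = (star x ⬝ᵥ w + star w ⬝ᵥ x).re := by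
  refine sub_eq_zero.1 (eq_zero_of_forall_mul_le_sq_mul
    (b := (star w ⬝ᵥ w).re - (star w ⬝ᵥ N *ᵥ w).re) fun t => ?_)
  classical
  have h := hle (x + (t : ℂ) • w)
  have h1 := star_add_smul_dotProduct_mulVec 1 x w t
  simp only [one_mulVec] at h1
  rw [star_add_smul_dotProduct_mulVec, h1] at h
  simp only [Complex.add_re, ← Complex.ofReal_pow, Complex.re_ofReal_mul] at h ⊢
  linarith

lemma dotProduct_mulVec_add_star_eq
    (hle : ∀ v, (star v ⬝ᵥ N *ᵥ v).re ≤ (star v ⬝ᵥ v).re)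
    (heq : (star x ⬝ᵥ N *ᵥ x).re = (star x ⬝ᵥ x).re) (w : n → ℂ) :
    star x ⬝ᵥ N *ᵥ w + star (star w ⬝ᵥ N *ᵥ x) = star x ⬝ᵥ w + star (star w ⬝ᵥ x) := by
  have hre := re_dotProduct_mulVec_add_eq hle heq w
  have him := re_dotProduct_mulVec_add_eq hle heq (Complex.I • w)
  simp only [mulVec_smul, dotProduct_smul, star_smul, smul_dotProduct, smul_eq_mul,
    Complex.star_def, Complex.conj_I, Complex.add_re, Complex.mul_re, Complex.neg_re,
    Complex.neg_im, Complex.I_re, Complex.I_im] at him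
  apply Complex.ext <;> simp only [Complex.add_re, Complex.add_im, Complex.star_def,
    Complex.conj_re, Complex.conj_im] at hre ⊢ <;> linarith

lemma norm_apply_le_one_of_dotProduct_star_self_eq_one {u : n → ℂ} (hu : star u ⬝ᵥ u = 1)
    (i : n) : ‖u i‖ ≤ 1 := by
  have hsum : ∑ k, ((‖u k‖ ^ 2 : ℝ) : ℂ) = 1 := by
    simpa [dotProduct, Complex.conj_mul'] using hu
  norm_cast at hsum
  rw [← sq_le_one_iff₀ (norm_nonneg _), ← hsum]
  exact Finset.single_le_sum (fun k _ => sq_nonneg ‖u k‖) (Finset.mem_univ i)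

lemma bddAbove_norm_numRange (A : Matrix n n ℂ) : BddAbove {r | ∃ z ∈ numRange A, r = ‖z‖} := by
  refine ⟨∑ i, ∑ j, ‖A i j‖, ?_⟩
  rintro _ ⟨_, ⟨u, hu, rfl⟩, rfl⟩
  have hu1 := norm_apply_le_one_of_dotProduct_star_self_eq_one hu
  calc ‖star u ⬝ᵥ A *ᵥ u‖ ≤ ∑ i, ∑ j, ‖u i‖ * (‖A i j‖ * ‖u j‖) := by
        simp only [dotProduct, mulVec]
        refine (norm_sum_le _ _).trans (Finset.sum_le_sum fun i _ => ?_)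
        rw [norm_mul, Pi.star_apply, norm_star]
        refine (mul_le_mul_of_nonneg_left (norm_sum_le _ _) (norm_nonneg _)).trans ?_
        rw [Finset.mul_sum]
        simp only [norm_mul, le_refl]
    _ ≤ ∑ i, ∑ j, ‖A i j‖ := by
        gcongr with i _ j _
        calc ‖u i‖ * (‖A i j‖ * ‖u j‖) ≤ 1 * (‖A i j‖ * 1) := by gcongr <;> exact hu1 _
          _ = ‖A i j‖ := by ring

lemma norm_le_numRadius (A : Matrix n n ℂ) {u : n → ℂ} (hu : star u ⬝ᵥ u = 1) :
    ‖star u ⬝ᵥ A *ᵥ u‖ ≤ numRadius A :=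
  le_csSup (bddAbove_norm_numRange A) ⟨_, ⟨u, hu, rfl⟩, rfl⟩

open scoped ComplexOrder in
lemma norm_dotProduct_mulVec_le_numRadius_mul (A : Matrix n n ℂ) (v : n → ℂ) :
    ‖star v ⬝ᵥ A *ᵥ v‖ ≤ numRadius A * (star v ⬝ᵥ v).re := by
  classical
  rcases eq_or_ne v 0 with rfl | hv
  · simp
  obtain ⟨r, hr, hvv⟩ := RCLike.pos_iff_exists_ofReal.1 (dotProduct_star_self_pos_iff.2 hv)
  replace hvv : (r : ℂ) = star v ⬝ᵥ v := hvv
  have hscale : ∀ B : Matrix n n ℂ, star ((√r)⁻¹ • v) ⬝ᵥ B *ᵥ ((√r)⁻¹ • v) =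
      (r⁻¹ : ℝ) * (star v ⬝ᵥ B *ᵥ v) := by
    intro B
    rw [star_smul, mulVec_smul, smul_dotProduct, dotProduct_smul, ← mul_smul,
      Complex.real_smul, star_trivial, ← mul_inv, Real.mul_self_sqrt hr.le]
  have hu : star ((√r)⁻¹ • v) ⬝ᵥ ((√r)⁻¹ • v) = 1 := by
    have := hscale 1
    simp only [one_mulVec] at this
    rw [this, ← hvv]
    exact_mod_cast inv_mul_cancel₀ hr.ne'
  have := norm_le_numRadius A hu
  rw [hscale, norm_mul, Complex.norm_real, Real.norm_of_nonneg (by positivity)] at this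
  rw [← hvv, Complex.ofReal_re]
  rwa [inv_mul_le_iff₀ hr, mul_comm] at this

open scoped ComplexOrder in
lemma re_dotProduct_smul_mulVec_le {A : Matrix n n ℂ} (hA : numRadius A ≤ 1) {c : ℂ}
    (hc : ‖c‖ ≤ 1) (v : n → ℂ) : (star v ⬝ᵥ (c • A) *ᵥ v).re ≤ (star v ⬝ᵥ v).re := by
  have hv : 0 ≤ (star v ⬝ᵥ v).re := (Complex.nonneg_iff.1 (dotProduct_star_self_nonneg v)).1
  calc (star v ⬝ᵥ (c • A) *ᵥ v).re ≤ ‖c‖ * ‖star v ⬝ᵥ A *ᵥ v‖ := by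
        rw [smul_mulVec, dotProduct_smul, smul_eq_mul, ← norm_mul]
        exact Complex.re_le_norm _
    _ ≤ 1 * (numRadius A * (star v ⬝ᵥ v).re) :=
        mul_le_mul hc (norm_dotProduct_mulVec_le_numRadius_mul A v) (norm_nonneg _) zero_le_one
    _ ≤ (star v ⬝ᵥ v).re := by nlinarith

lemma conjTranspose_mul_mul_apply (U B : Matrix n n ℂ) (i j : n) :
    (Uᴴ * B * U) i j = star (Uᵀ i) ⬝ᵥ B *ᵥ Uᵀ j := by
  simp [Matrix.mul_apply, dotProduct, mulVec, Finset.mul_sum, Finset.sum_mul, mul_assoc]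
  exact Finset.sum_comm

lemma star_transpose_dotProduct_transpose [DecidableEq n] {U : Matrix n n ℂ}
    (hU : U ∈ unitaryGroup n ℂ) (i j : n) : star (Uᵀ i) ⬝ᵥ Uᵀ j = (1 : Matrix n n ℂ) i j := by
  rw [← one_mulVec (Uᵀ j), ← conjTranspose_mul_mul_apply, Matrix.mul_one,
    ← star_eq_conjTranspose, mem_unitaryGroup_iff'.1 hU]

lemma conjTranspose_mul_mul_apply_add_star_eq_zero [DecidableEq n] {U : Matrix n n ℂ}
    (hle : ∀ v, (star v ⬝ᵥ N *ᵥ v).re ≤ (star v ⬝ᵥ v).re) (hU : U ∈ unitaryGroup n ℂ) {i j : n}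
    (hii : ((Uᴴ * N * U) i i).re = 1) (hij : i ≠ j) :
    (Uᴴ * N * U) i j + star ((Uᴴ * N * U) j i) = 0 := by
  have heq : (star (Uᵀ i) ⬝ᵥ N *ᵥ Uᵀ i).re = (star (Uᵀ i) ⬝ᵥ Uᵀ i).re := by
    rw [← conjTranspose_mul_mul_apply, hii, star_transpose_dotProduct_transpose hU, one_apply_eq,
      Complex.one_re]
  simpa [conjTranspose_mul_mul_apply, star_transpose_dotProduct_transpose hU, hij, hij.symm]
    using dotProduct_mulVec_add_star_eq hle heq (Uᵀ j)

end

theorem block_form_of_radius_attained_general (n : ℕ) (A : Matrix (Fin (n + 1)) (Fin (n + 1)) ℂ)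
    (hA : numRadius A = 1) (x : Fin (n + 1) → ℂ)
    (hxA : ‖dotProduct (star x) (A.mulVec x)‖ = 1)
    (U : Matrix (Fin (n + 1)) (Fin (n + 1)) ℂ)
    (hU : U ∈ Matrix.unitaryGroup (Fin (n + 1)) ℂ)
    (hUx : ∀ i, U i 0 = x i) :
    ∃ (y : Fin n → ℂ) (B : Matrix (Fin n) (Fin n) ℂ),
      let c := dotProduct (star x) (A.mulVec x)
      let M := Uᴴ * A * U
      M 0 0 = c ∧
      (∀ j : Fin n, M 0 j.succ = c * star (y j)) ∧
      (∀ i : Fin n, M i.succ 0 = c * (- y i)) ∧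
      (∀ i j : Fin n, M i.succ j.succ = c * B i j) := by
  set c := star x ⬝ᵥ A *ᵥ x
  set M := Uᴴ * A * U
  have hcc : c * star c = 1 := by
    rw [Complex.star_def, Complex.mul_conj', hxA]
    norm_num
  have hM00 : M 0 0 = c :=
    (conjTranspose_mul_mul_apply U A 0 0).trans (by rw [show Uᵀ 0 = x from funext hUx])
  have hcM : Uᴴ * (star c • A) * U = star c • M := by rw [Matrix.mul_smul, Matrix.smul_mul]
  have hskew (j : Fin n) : star c * M 0 j.succ + star (star c * M j.succ 0) = 0 := by
    have hle := re_dotProduct_smul_mulVec_le hA.le (c := star c) (by rw [norm_star, hxA])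
    simpa [hcM] using conjTranspose_mul_mul_apply_add_star_eq_zero hle hU
      (by rw [hcM, Matrix.smul_apply, hM00, smul_eq_mul, mul_comm, hcc, Complex.one_re])
      (Fin.succ_ne_zero j).symm
  refine ⟨fun j => star (star c * M 0 j.succ), fun i j => star c * M i.succ j.succ, hM00, ?_, ?_, ?_⟩
  · intro j
    simp only [star_mul, star_star]
    linear_combination (-(M 0 j.succ)) * hcc
  · intro i
    have h := congrArg star (hskew i)
    simp only [star_add, star_mul, star_star, star_zero] at h ⊢
    linear_combination c * h - (M i.succ 0) * hcc
  · intro i j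
    linear_combination (-(M i.succ j.succ)) * hcc

theorem block_form_of_radius_attained (n : ℕ) (A : Matrix (Fin (n + 1)) (Fin (n + 1)) ℂ)
    (hA : numRadius A = 1) (x : Fin (n + 1) → ℂ)
    (hx : dotProduct (star x) x = 1)
    (hxA : ‖dotProduct (star x) (A.mulVec x)‖ = 1)
    (U : Matrix (Fin (n + 1)) (Fin (n + 1)) ℂ)
    (hU : U ∈ Matrix.unitaryGroup (Fin (n + 1)) ℂ)
    (hUx : ∀ i, U i 0 = x i) :
    ∃ (y : Fin n → ℂ) (B : Matrix (Fin n) (Fin n) ℂ),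
      let c := dotProduct (star x) (A.mulVec x)
      let M := Uᴴ * A * U
      M 0 0 = c ∧
      (∀ j : Fin n, M 0 j.succ = c * star (y j)) ∧
      (∀ i : Fin n, M i.succ 0 = c * (- y i)) ∧
      (∀ i j : Fin n, M i.succ j.succ = c * B i j) :=
  block_form_of_radius_attained_general n A hA x hxA U hU hUx
end

section
/- Let X = [[0,2,0],[0,0,1],[0,0,0]] ∈ M_3(ℂ). Then the numerical radius of X ⊗ X equals √4.25, i.e., w(X ⊗ X) = √(17)/2. -/
open Matrix Kronecker

/-
The form u ↦ u*(X ⊗ X)u only couples the coordinates (00, 11, 22), (01, 12) and (10, 21) of u.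
On the triple it is the 3 × 3 weighted shift with weights 4, 1, whose numerical radius is
√(4² + 1²)/2 = √17/2, attained at (4, √17, 1)/√34; on each pair it is a 2 × 2 shift with weight 2,
whose numerical radius 1 is smaller. After the triangle inequality both bounds are
elementary real inequalities in the moduli of the coordinates.
-/

open ComplexConjugate

lemma numRadius_eq_of_forall_norm_le {n : Type*} [Fintype n] {A : Matrix n n ℂ} {c : ℝ}
    (hle : ∀ u : n → ℂ, star u ⬝ᵥ u = 1 → ‖star u ⬝ᵥ A *ᵥ u‖ ≤ c)
    {z : ℂ} (hz : z ∈ numRange A) (hzc : ‖z‖ = c) : numRadius A = c := by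
  refine IsGreatest.csSup_eq ⟨⟨z, hz, hzc.symm⟩, ?_⟩
  rintro r ⟨w, ⟨u, hu, rfl⟩, rfl⟩
  exact hle u hu

lemma dotProduct_star_self_eq_sum_norm_sq {n : Type*} [Fintype n] (u : n → ℂ) :
    star u ⬝ᵥ u = ((∑ i, ‖u i‖ ^ 2 : ℝ) : ℂ) := by
  simp [dotProduct, Complex.conj_mul']

def shiftX : Matrix (Fin 3) (Fin 3) ℂ := !![0, 2, 0; 0, 0, 1; 0, 0, 0]

lemma star_dotProduct_shiftX_kronecker_mulVec (u : Fin 3 × Fin 3 → ℂ) :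
    star u ⬝ᵥ (shiftX ⊗ₖ shiftX) *ᵥ u =
      4 * conj (u (0, 0)) * u (1, 1) + 2 * conj (u (0, 1)) * u (1, 2)
        + 2 * conj (u (1, 0)) * u (2, 1) + conj (u (1, 1)) * u (2, 2) := by
  simp [shiftX, dotProduct, mulVec, Fintype.sum_prod_type, Fin.sum_univ_three, kroneckerMap_apply]
  ring

lemma two_mul_mul_four_mul_add_le (a d g : ℝ) :
    2 * d * (4 * a + g) ≤ √17 * (a ^ 2 + d ^ 2 + g ^ 2) := by
  have h17 : √17 ^ 2 = 17 := Real.sq_sqrt (by norm_num)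
  have hpos : 0 < √17 := by positivity
  refine le_of_mul_le_mul_left ?_ hpos
  -- √17 · (√17 (a² + d² + g²) - 2d(4a + g)) = (√17 d - 4a - g)² + (a - 4g)²
  nlinarith [sq_nonneg (√17 * d - 4 * a - g), sq_nonneg (a - 4 * g)]

lemma four_mul_mul_le (b e : ℝ) : 4 * b * e ≤ √17 * (b ^ 2 + e ^ 2) := by
  have h2 : 2 ≤ √17 := Real.le_sqrt_of_sq_le (by norm_num)
  nlinarith [sq_nonneg (b - e), sq_nonneg b, sq_nonneg e]

lemma norm_star_dotProduct_shiftX_kronecker_mulVec_le (u : Fin 3 × Fin 3 → ℂ) :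
    ‖star u ⬝ᵥ (shiftX ⊗ₖ shiftX) *ᵥ u‖ ≤ √17 / 2 * ∑ i, ‖u i‖ ^ 2 := by
  rw [star_dotProduct_shiftX_kronecker_mulVec]
  refine norm_add₄_le.trans ?_
  simp only [norm_mul, Complex.norm_conj, Complex.norm_ofNat, Fintype.sum_prod_type,
    Fin.sum_univ_three]
  nlinarith [two_mul_mul_four_mul_add_le ‖u (0, 0)‖ ‖u (1, 1)‖ ‖u (2, 2)‖,
    four_mul_mul_le ‖u (0, 1)‖ ‖u (1, 2)‖, four_mul_mul_le ‖u (1, 0)‖ ‖u (2, 1)‖,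
    sq_nonneg ‖u (0, 2)‖, sq_nonneg ‖u (2, 0)‖, Real.sqrt_nonneg 17]

lemma sqrt17_div_two_mem_numRange : ((√17 / 2 : ℝ) : ℂ) ∈ numRange (shiftX ⊗ₖ shiftX) := by
  have h17 : (√17 : ℂ) ^ 2 = 17 := by exact_mod_cast Real.sq_sqrt (by norm_num : (0 : ℝ) ≤ 17)
  have h34 : (√34 : ℂ) ^ 2 = 34 := by exact_mod_cast Real.sq_sqrt (by norm_num : (0 : ℝ) ≤ 34)
  have h34' : (√34 : ℂ) ≠ 0 := by exact_mod_cast (Real.sqrt_pos.2 (by norm_num)).ne'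
  refine ⟨fun p => (!![4, 0, 0; 0, √17, 0; 0, 0, 1] : Matrix (Fin 3) (Fin 3) ℂ) p.1 p.2 / √34,
    ?_, ?_⟩
  · simp [dotProduct, Fintype.sum_prod_type, Fin.sum_univ_three, Complex.conj_ofReal, map_ofNat]
    field_simp
    linear_combination h17 - h34
  · rw [star_dotProduct_shiftX_kronecker_mulVec]
    simp [Complex.conj_ofReal, map_ofNat]
    field_simp
    linear_combination h34

theorem radius_XkronX :
    let X : Matrix (Fin 3) (Fin 3) ℂ := !![0, 2, 0; 0, 0, 1; 0, 0, 0]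
    numRadius (X ⊗ₖ X) = Real.sqrt 17 / 2 := by
  show numRadius (shiftX ⊗ₖ shiftX) = √17 / 2
  refine numRadius_eq_of_forall_norm_le (fun u hu => ?_) sqrt17_div_two_mem_numRange
    (by rw [Complex.norm_real, Real.norm_of_nonneg (by positivity)])
  have hsum : ∑ i, ‖u i‖ ^ 2 = 1 := by
    exact_mod_cast (dotProduct_star_self_eq_sum_norm_sq u).symm.trans hu
  simpa [hsum] using norm_star_dotProduct_shiftX_kronecker_mulVec_le u
end

section
/- Let X = [[0,2,0],[0,0,1],[0,0,0]] ∈ M_3(ℂ). Then w(X ⊗ Xᵗ) = 2, where Xᵗ is the transpose of X. -/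
/-!
For `u : Fin 3 × Fin 3 → ℂ` the quadratic form of `X ⊗ Xᵀ` is
`4 ū₀₁ u₁₀ + 2 ū₀₂ u₁₁ + 2 ū₁₁ u₂₀ + ū₁₂ u₂₁`. Its modulus is at most
`4 ab + 2 d (c + e) + f g` in the moduli `a, …, g` of these coordinates, and this is at most
`2 ‖u‖²` by AM–GM, using `2 d (c + e) ≤ d² + (c + e)² ≤ 2 (c² + d² + e²)` for the middle terms.
Equality holds at `u = (e₀₁ + e₁₀) / √2`.
-/

open Matrix Kronecker

section NumRadius

variable {n : Type*} [Fintype n]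

theorem numRadius_eq_of_le_of_exists {A : Matrix n n ℂ} {c : ℝ}
    (hle : ∀ u : n → ℂ, star u ⬝ᵥ u = 1 → ‖star u ⬝ᵥ A *ᵥ u‖ ≤ c)
    (hex : ∃ u : n → ℂ, star u ⬝ᵥ u = 1 ∧ ‖star u ⬝ᵥ A *ᵥ u‖ = c) :
    numRadius A = c := by
  obtain ⟨u, hu, hc⟩ := hex
  refine IsGreatest.csSup_eq ⟨⟨_, ⟨u, hu, rfl⟩, hc.symm⟩, ?_⟩
  rintro r ⟨z, ⟨v, hv, rfl⟩, rfl⟩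
  exact hle v hv

theorem dotProduct_star_self_eq_sum_sq_norm (u : n → ℂ) :
    star u ⬝ᵥ u = ((∑ i, ‖u i‖ ^ 2 : ℝ) : ℂ) := by
  simp [dotProduct, Complex.conj_mul']

theorem norm_dotProduct_star_mulVec_le (A : Matrix n n ℂ) (u : n → ℂ) :
    ‖star u ⬝ᵥ A *ᵥ u‖ ≤ ∑ i, ∑ j, ‖A i j‖ * (‖u i‖ * ‖u j‖) := by
  simp only [dotProduct, mulVec, Finset.mul_sum]
  refine (norm_sum_le _ _).trans (Finset.sum_le_sum fun i _ => (norm_sum_le _ _).trans ?_)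
  refine Finset.sum_le_sum fun j _ => le_of_eq ?_
  simp only [Pi.star_apply, norm_mul, norm_star]
  ring

theorem dotProduct_star_mulVec_normalized_single_add_single [DecidableEq n] {i j : n}
    (hij : i ≠ j) (A : Matrix n n ℂ) :
    let u : n → ℂ := (√2 : ℂ)⁻¹ • (Pi.single i 1 + Pi.single j 1)
    star u ⬝ᵥ u = 1 ∧ star u ⬝ᵥ A *ᵥ u = (A i i + A i j + A j i + A j j) / 2 := by
  intro u
  have hstar : star u = u := by
    simp [u, star_smul, Pi.star_single]
  have hsq : (√2 : ℂ)⁻¹ * (√2 : ℂ)⁻¹ = 1 / 2 := by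
    rw [← mul_inv, ← Complex.ofReal_mul, Real.mul_self_sqrt zero_le_two]
    norm_num
  rw [hstar]
  constructor
  · simp only [u, smul_add, dotProduct_add, dotProduct_smul, dotProduct_single, Pi.add_apply,
      Pi.smul_apply, Pi.single_eq_same, smul_eq_mul, mul_one, Pi.single_eq_of_ne hij,
      Pi.single_eq_of_ne hij.symm, mul_zero, add_zero, zero_add]
    linear_combination 2 * hsq
  · simp only [u, smul_add, mulVec_add, mulVec_smul, mulVec_single, MulOpposite.op_one,
      one_smul, dotProduct_add, dotProduct_smul, add_dotProduct, smul_dotProduct,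
      single_dotProduct, col_apply, one_mul, smul_eq_mul]
    linear_combination (A i i + A i j + A j i + A j j) * hsq

end NumRadius

def weightedShift : Matrix (Fin 3) (Fin 3) ℂ := !![0, 2, 0; 0, 0, 1; 0, 0, 0]

theorem norm_dotProduct_star_weightedShift_kronecker_mulVec_le (u : Fin 3 × Fin 3 → ℂ) :
    ‖star u ⬝ᵥ (weightedShift ⊗ₖ weightedShiftᵀ) *ᵥ u‖ ≤ 2 * ∑ p, ‖u p‖ ^ 2 := by
  calc ‖star u ⬝ᵥ (weightedShift ⊗ₖ weightedShiftᵀ) *ᵥ u‖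
      ≤ ∑ p, ∑ q, ‖(weightedShift ⊗ₖ weightedShiftᵀ) p q‖ * (‖u p‖ * ‖u q‖) :=
        norm_dotProduct_star_mulVec_le _ u
    _ = 4 * ‖u (0, 1)‖ * ‖u (1, 0)‖ + 2 * ‖u (1, 1)‖ * (‖u (0, 2)‖ + ‖u (2, 0)‖)
          + ‖u (1, 2)‖ * ‖u (2, 1)‖ := by
        simp only [weightedShift, kroneckerMap_apply, of_apply, cons_val', cons_val_fin_one,
          transpose_apply, Complex.norm_mul, Fintype.sum_prod_type, Fin.sum_univ_three,
          Fin.isValue, cons_val_zero, cons_val_one, cons_val, norm_zero, mul_zero, zero_mul,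
          add_zero, Complex.norm_ofNat, zero_add, norm_one, mul_one, one_mul]
        ring
    _ ≤ 2 * ∑ p, ‖u p‖ ^ 2 := by
        simp only [Fintype.sum_prod_type, Fin.sum_univ_three]
        nlinarith [sq_nonneg (‖u (0, 1)‖ - ‖u (1, 0)‖),
          sq_nonneg (‖u (1, 1)‖ - ‖u (0, 2)‖ - ‖u (2, 0)‖), sq_nonneg (‖u (0, 2)‖ - ‖u (2, 0)‖),
          sq_nonneg (‖u (1, 2)‖ - ‖u (2, 1)‖), sq_nonneg (‖u (1, 2)‖ + ‖u (2, 1)‖),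
          sq_nonneg ‖u (1, 1)‖, sq_nonneg ‖u (0, 0)‖, sq_nonneg ‖u (2, 2)‖]

theorem exists_norm_dotProduct_star_weightedShift_kronecker_mulVec_eq_two :
    ∃ u : Fin 3 × Fin 3 → ℂ, star u ⬝ᵥ u = 1 ∧
      ‖star u ⬝ᵥ (weightedShift ⊗ₖ weightedShiftᵀ) *ᵥ u‖ = 2 := by
  obtain ⟨hu, hform⟩ := dotProduct_star_mulVec_normalized_single_add_single
    (i := ((0, 1) : Fin 3 × Fin 3)) (j := (1, 0)) (by decide) (weightedShift ⊗ₖ weightedShiftᵀ)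
  refine ⟨_, hu, ?_⟩
  rw [hform]
  norm_num [weightedShift]

theorem radius_XkronXt :
    let X : Matrix (Fin 3) (Fin 3) ℂ := !![0, 2, 0; 0, 0, 1; 0, 0, 0]
    numRadius (X ⊗ₖ Xᵀ) = 2 := by
  refine numRadius_eq_of_le_of_exists (A := weightedShift ⊗ₖ weightedShiftᵀ) (fun u hu => ?_)
    exists_norm_dotProduct_star_weightedShift_kronecker_mulVec_eq_two
  have hunit : ∑ p, ‖u p‖ ^ 2 = 1 := by
    exact_mod_cast (dotProduct_star_self_eq_sum_sq_norm u).symm.trans hu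
  simpa [hunit] using norm_dotProduct_star_weightedShift_kronecker_mulVec_le u
end

section
/- Let X = [[0,2,0],[0,0,1],[0,0,0]] ∈ M_3(ℂ). Then w(X ⊗ X) ≠ w(X ⊗ Xᵗ); hence the partial transpose map A ⊗ B ↦ A ⊗ Bᵗ does not preserve the numerical radius of tensor products in M_3 ⊗ M_3. -/
open Matrix Kronecker

/-!
Up to a permutation of the basis, `X ⊗ Xᵀ` is a direct sum of weighted shifts with weights
`(4)`, `(2, 2)` and `(1)`, while `X ⊗ X` contains the weighted shift with weights `(4, 1)` on
`span {e₀₀, e₁₁, e₂₂}`. The first has numerical radius `2`, which the bound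
`|⟨u, A u⟩| ≤ ∑ |Aᵢⱼ| |uᵢ| |uⱼ|` followed by AM-GM shows; the second has numerical radius
`√17 / 2 > 2`, witnessed by the rational unit vector `(10 e₀₀ + 11 e₁₁ + 2 e₂₂) / 15`.
-/

section
variable {𝕜 n : Type*} [RCLike 𝕜] [Fintype n]

lemma sum_norm_sq_eq_one_of_star_dotProduct_self {u : n → 𝕜} (hu : star u ⬝ᵥ u = 1) :
    ∑ i, ‖u i‖ ^ 2 = 1 := by
  have : ((∑ i, ‖u i‖ ^ 2 : ℝ) : 𝕜) = 1 := by
    rw [← hu]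
    push_cast
    exact Finset.sum_congr rfl fun i _ => (RCLike.conj_mul (u i)).symm
  exact_mod_cast this

lemma norm_le_one_of_star_dotProduct_self {u : n → 𝕜} (hu : star u ⬝ᵥ u = 1) (i : n) :
    ‖u i‖ ≤ 1 := by
  have hsq : ‖u i‖ ^ 2 ≤ 1 := sum_norm_sq_eq_one_of_star_dotProduct_self hu ▸
    Finset.single_le_sum (fun j _ => sq_nonneg ‖u j‖) (Finset.mem_univ i)
  exact (sq_le_one_iff₀ (norm_nonneg _)).mp hsq

lemma norm_star_dotProduct_mulVec_le (A : Matrix n n 𝕜) (u : n → 𝕜) :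
    ‖star u ⬝ᵥ A *ᵥ u‖ ≤ ∑ i, ∑ j, ‖A i j‖ * (‖u i‖ * ‖u j‖) := by
  simp only [dotProduct, mulVec, Pi.star_apply, Finset.mul_sum]
  refine (norm_sum_le _ _).trans (Finset.sum_le_sum fun i _ => (norm_sum_le _ _).trans ?_)
  refine Finset.sum_le_sum fun j _ => ?_
  rw [norm_mul, norm_mul, norm_star]
  exact (mul_left_comm _ _ _).le

end

section
variable {n : Type*} [Fintype n]

lemma norm_le_sum_norm_of_mem_numRange {A : Matrix n n ℂ} {z : ℂ} (hz : z ∈ numRange A) :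
    ‖z‖ ≤ ∑ i, ∑ j, ‖A i j‖ := by
  obtain ⟨u, hu, rfl⟩ := hz
  have hu₁ := norm_le_one_of_star_dotProduct_self hu
  refine (norm_star_dotProduct_mulVec_le A u).trans
    (Finset.sum_le_sum fun i _ => Finset.sum_le_sum fun j _ => ?_)
  exact mul_le_of_le_one_right (norm_nonneg _) (mul_le_one₀ (hu₁ i) (norm_nonneg _) (hu₁ j))

lemma norm_le_numRadius_s6 {A : Matrix n n ℂ} {z : ℂ} (hz : z ∈ numRange A) :
    ‖z‖ ≤ numRadius A :=
  le_csSup ⟨_, by rintro r ⟨w, hw, rfl⟩; exact norm_le_sum_norm_of_mem_numRange hw⟩ ⟨z, hz, rfl⟩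

lemma numRadius_le {A : Matrix n n ℂ} {c : ℝ} (hc : 0 ≤ c)
    (h : ∀ u : n → ℂ, star u ⬝ᵥ u = 1 → ‖star u ⬝ᵥ A *ᵥ u‖ ≤ c) : numRadius A ≤ c :=
  Real.sSup_le (by rintro r ⟨z, ⟨u, hu, rfl⟩, rfl⟩; exact h u hu) hc

end

def shiftMatrix : Matrix (Fin 3) (Fin 3) ℂ := !![0, 2, 0; 0, 0, 1; 0, 0, 0]

lemma numRadius_kronecker_transpose_le :
    numRadius (shiftMatrix ⊗ₖ shiftMatrixᵀ) ≤ 2 := by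
  refine numRadius_le zero_le_two fun u hu => (norm_star_dotProduct_mulVec_le _ u).trans ?_
  have hsum := sum_norm_sq_eq_one_of_star_dotProduct_self hu
  simp only [Fintype.sum_prod_type, Fin.sum_univ_three, Fin.isValue, shiftMatrix,
    kroneckerMap_apply, of_apply, cons_val', cons_val_fin_one, transpose_apply, Complex.norm_mul,
    cons_val_zero, cons_val_one, cons_val, norm_zero, mul_zero, zero_mul, add_zero,
    Complex.norm_ofNat, zero_add, norm_one, mul_one, one_mul] at hsum ⊢
  linarith [sq_nonneg (‖u (0, 1)‖ - ‖u (1, 0)‖), sq_nonneg (‖u (0, 2)‖ - ‖u (1, 1)‖),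
    sq_nonneg (‖u (1, 1)‖ - ‖u (2, 0)‖), sq_nonneg (‖u (1, 2)‖ - ‖u (2, 1)‖),
    sq_nonneg ‖u (0, 0)‖, sq_nonneg ‖u (0, 2)‖, sq_nonneg ‖u (2, 0)‖, sq_nonneg ‖u (1, 2)‖,
    sq_nonneg ‖u (2, 1)‖, sq_nonneg ‖u (2, 2)‖]

lemma two_lt_numRadius_kronecker :
    2 < numRadius (shiftMatrix ⊗ₖ shiftMatrix) := by
  let u : Fin 3 × Fin 3 → ℂ := fun p => !![10, 0, 0; 0, 11, 0; 0, 0, 2] p.1 p.2 / 15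
  have hu : star u ⬝ᵥ u = 1 := by
    simp [u, dotProduct, Fintype.sum_prod_type, Fin.sum_univ_three, map_ofNat]
    norm_num
  have hz : star u ⬝ᵥ (shiftMatrix ⊗ₖ shiftMatrix) *ᵥ u = 462 / 225 := by
    simp [u, dotProduct, mulVec, Fintype.sum_prod_type, Fin.sum_univ_three, shiftMatrix,
      map_ofNat]
    norm_num
  calc (2 : ℝ) < ‖(462 / 225 : ℂ)‖ := by norm_num
    _ ≤ numRadius (shiftMatrix ⊗ₖ shiftMatrix) := norm_le_numRadius_s6 ⟨u, hu, hz.symm⟩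

theorem radius_kron_ne_kron_transpose :
    let X : Matrix (Fin 3) (Fin 3) ℂ := !![0, 2, 0; 0, 0, 1; 0, 0, 0]
    numRadius (X ⊗ₖ X) ≠ numRadius (X ⊗ₖ Xᵀ) :=
  (numRadius_kronecker_transpose_le.trans_lt two_lt_numRadius_kronecker).ne'
end

section
/- For any A ∈ M_2(ℂ) and any B ∈ M_n(ℂ), W(A ⊗ B) = W(Aᵗ ⊗ B), where ⊗ is the Kronecker product. -/
open Matrix Kronecker

/-!
A 2 × 2 complex matrix `A` is unitarily similar to its transpose. Indeed, if `U` is a symmetric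
unitary with `A * U` symmetric, then `U * Aᵀ = (A * U)ᵀ = A * U`; such a `U` can be found among the
reflections `[[cos θ, sin θ], [sin θ, -cos θ]]` twisted by a diagonal phase, where the symmetry of
`A * U` is one real-linear condition on `(cos θ, sin θ)` once the phase is chosen suitably.
Conjugating `A ⊗ B` by the unitary `U ⊗ 1` then gives `Aᵀ ⊗ B`, and the numerical range is invariant
under unitary similarity.
-/

open ComplexConjugate

theorem numRange_star_mul_mul_subset {n : Type*} [Fintype n] [DecidableEq n]
    {U : Matrix n n ℂ} (hU : U ∈ unitaryGroup n ℂ) (M : Matrix n n ℂ) :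
    numRange (star U * M * U) ⊆ numRange M := by
  rintro z ⟨u, hu, rfl⟩
  refine ⟨U *ᵥ u, ?_, ?_⟩
  · rw [star_mulVec, ← dotProduct_mulVec, mulVec_mulVec, ← star_eq_conjTranspose,
      (mem_unitaryGroup_iff'.mp hU), one_mulVec, hu]
  · rw [star_mulVec, ← dotProduct_mulVec, mulVec_mulVec, mulVec_mulVec, ← star_eq_conjTranspose,
      Matrix.mul_assoc]

theorem numRange_star_mul_mul {n : Type*} [Fintype n] [DecidableEq n]
    {U : Matrix n n ℂ} (hU : U ∈ unitaryGroup n ℂ) (M : Matrix n n ℂ) :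
    numRange (star U * M * U) = numRange M := by
  refine (numRange_star_mul_mul_subset hU M).antisymm ?_
  have hUU : U * star U = 1 := mem_unitaryGroup_iff.mp hU
  have h := numRange_star_mul_mul_subset (Unitary.star_mem hU) (star U * M * U)
  rwa [star_star, ← Matrix.mul_assoc, ← Matrix.mul_assoc, hUU, Matrix.one_mul, Matrix.mul_assoc,
    hUU, Matrix.mul_one] at h

theorem numRange_star_mul_mul_kronecker {m n : Type*} [Fintype m] [DecidableEq m] [Fintype n]
    [DecidableEq n] {U : Matrix m m ℂ} (hU : U ∈ unitaryGroup m ℂ) (A : Matrix m m ℂ)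
    (B : Matrix n n ℂ) : numRange ((star U * A * U) ⊗ₖ B) = numRange (A ⊗ₖ B) := by
  have hUB : (star U * A * U) ⊗ₖ B = star (U ⊗ₖ 1) * (A ⊗ₖ B) * (U ⊗ₖ (1 : Matrix n n ℂ)) := by
    simp only [star_eq_conjTranspose]
    rw [conjTranspose_kronecker, conjTranspose_one, ← mul_kronecker_mul,
      ← mul_kronecker_mul, Matrix.one_mul, Matrix.mul_one]
  rw [hUB, numRange_star_mul_mul (kronecker_mem_unitary hU (one_mem _))]

theorem transpose_eq_star_mul_mul_of_isSymm {n R : Type*} [Fintype n] [DecidableEq n] [CommRing R]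
    [StarRing R] {U A : Matrix n n R} (hU : U ∈ unitaryGroup n R) (hUs : U.IsSymm)
    (hAU : (A * U).IsSymm) : Aᵀ = star U * A * U := by
  have hcomm : U * Aᵀ = A * U := by rw [← hUs.eq, ← transpose_mul, hAU.eq, hUs.eq]
  rw [Matrix.mul_assoc, ← hcomm, ← Matrix.mul_assoc, mem_unitaryGroup_iff'.mp hU, Matrix.one_mul]

theorem Complex.exists_norm_eq_one_im_mul_eq_zero (w : ℂ) : ∃ t : ℂ, ‖t‖ = 1 ∧ (w * t).im = 0 := by
  refine ⟨exp (-(w.arg : ℂ) * I), by simpa using norm_exp_ofReal_mul_I (-w.arg), ?_⟩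
  have h : w * exp (-(w.arg : ℂ) * I) = ‖w‖ :=
    calc w * exp (-(w.arg : ℂ) * I) = ‖w‖ * exp (w.arg * I) * exp (-(w.arg : ℂ) * I) := by
          rw [norm_mul_exp_arg_mul_I]
      _ = ‖w‖ := by rw [mul_assoc, ← exp_add, ← add_mul, add_neg_cancel, zero_mul, exp_zero,
          mul_one]
  rw [h, ofReal_im]

theorem Complex.exists_sin_mul_eq_cos_mul {z w : ℂ} (h : (conj z * w).im = 0) :
    ∃ θ : ℝ, Real.sin θ * z = Real.cos θ * w := by
  rcases eq_or_ne z 0 with rfl | hz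
  · exact ⟨Real.pi / 2, by simp⟩
  have him : (w / z).im = 0 := by
    simp only [mul_im, conj_re, conj_im] at h
    rw [div_im, div_sub_div_same, show w.im * z.re - w.re * z.im = 0 by linarith, zero_div]
  set r := (w / z).re
  have hq : w / z = r := ext (by simp [r]) (by simp [him])
  have hw : w = r * z := by rw [← hq, div_mul_cancel₀ w hz]
  have hsin : Real.sin (Real.arctan r) = r * Real.cos (Real.arctan r) := by
    have := Real.tan_arctan r
    rwa [Real.tan_eq_sin_div_cos, div_eq_iff (Real.cos_arctan_pos r).ne'] at this
  refine ⟨Real.arctan r, ?_⟩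
  rw [hsin, hw]
  push_cast
  ring

noncomputable def phasedReflection (θ : ℝ) (t : ℂ) : Matrix (Fin 2) (Fin 2) ℂ :=
  !![Real.cos θ * t, Real.sin θ; Real.sin θ, -(Real.cos θ * conj t)]

theorem phasedReflection_isSymm (θ : ℝ) (t : ℂ) : (phasedReflection θ t).IsSymm := by
  ext i j
  fin_cases i <;> fin_cases j <;> rfl

theorem phasedReflection_mem_unitaryGroup (θ : ℝ) {t : ℂ} (ht : ‖t‖ = 1) :
    phasedReflection θ t ∈ unitaryGroup (Fin 2) ℂ := by
  have htt : conj t * t = 1 := by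
    rw [mul_comm, Complex.mul_conj, Complex.normSq_eq_norm_sq, ht]; norm_num
  have hcs : (Real.cos θ : ℂ) ^ 2 + (Real.sin θ : ℂ) ^ 2 = 1 := by
    exact_mod_cast Real.cos_sq_add_sin_sq θ
  rw [mem_unitaryGroup_iff']
  ext i j
  fin_cases i <;> fin_cases j <;>
    simp [phasedReflection, Matrix.mul_apply, Fin.sum_univ_two, -Complex.ofReal_cos,
      -Complex.ofReal_sin]
  · linear_combination (Real.cos θ : ℂ) ^ 2 * htt + hcs
  · ring
  · ring
  · linear_combination (Real.cos θ : ℂ) ^ 2 * htt + hcs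

theorem isSymm_mul_phasedReflection (A : Matrix (Fin 2) (Fin 2) ℂ) {θ : ℝ} {t : ℂ}
    (h : Real.sin θ * (A 0 0 - A 1 1) = Real.cos θ * (A 1 0 * t + A 0 1 * conj t)) :
    (A * phasedReflection θ t).IsSymm := by
  ext i j
  fin_cases i <;> fin_cases j <;>
    simp [phasedReflection, Matrix.mul_apply, Fin.sum_univ_two, -Complex.ofReal_cos,
      -Complex.ofReal_sin]
  · linear_combination -h
  · linear_combination h

theorem exists_mem_unitaryGroup_transpose_eq (A : Matrix (Fin 2) (Fin 2) ℂ) :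
    ∃ U ∈ unitaryGroup (Fin 2) ℂ, Aᵀ = star U * A * U := by
  set δ := A 0 0 - A 1 1
  -- `θ` can be solved for once `conj δ * (A 1 0 * t + A 0 1 * conj t)` is real, and the imaginary
  -- part of that number is the imaginary part of `(conj δ * A 1 0 - δ * conj (A 0 1)) * t`.
  obtain ⟨t, ht, hWt⟩ :=
    Complex.exists_norm_eq_one_im_mul_eq_zero (conj δ * A 1 0 - δ * conj (A 0 1))
  have him : (conj δ * (A 1 0 * t + A 0 1 * conj t)).im = 0 := by
    simp only [Complex.mul_im, Complex.mul_re, Complex.add_im, Complex.add_re, Complex.sub_im,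
      Complex.sub_re, Complex.conj_re, Complex.conj_im] at hWt ⊢
    linarith
  obtain ⟨θ, hθ⟩ := Complex.exists_sin_mul_eq_cos_mul him
  have hU := phasedReflection_mem_unitaryGroup θ ht
  exact ⟨_, hU, transpose_eq_star_mul_mul_of_isSymm hU (phasedReflection_isSymm θ t)
    (isSymm_mul_phasedReflection A hθ)⟩

theorem numRange_kron_transpose_left (n : ℕ) (A : Matrix (Fin 2) (Fin 2) ℂ)
    (B : Matrix (Fin n) (Fin n) ℂ) :
    numRange (A ⊗ₖ B) = numRange (Aᵀ ⊗ₖ B) := by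
  obtain ⟨U, hU, hA⟩ := exists_mem_unitaryGroup_transpose_eq A
  rw [hA, numRange_star_mul_mul_kronecker hU]
end
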